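/- arXiv:1703.04461 — 3 statements merged into one kernel-verified Lean document; each statement's English description precedes it below -/
import Mathlib

section
/- For every q > 0 there exists a constant c > 0, depending only on q, such that for every complex inner product space E and all vectors x, y ∈ E one has Re⟨‖x‖^q • x − ‖y‖^q • y, x − y⟩ ≥ c · ‖x − y‖^{q+2}. -/
/-!
Expanding the inner product gives
`2 Re⟪‖x‖^q x − ‖y‖^q y, x − y⟫ = (‖x‖^q − ‖y‖^q)(‖x‖² − ‖y‖²) + (‖x‖^q + ‖y‖^q)‖x − y‖²`.
The first term is nonnegative because `t ↦ t^q` and `t ↦ t²` are both increasing on `[0, ∞)`,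
and the triangle inequality gives `‖x − y‖^q ≤ (‖x‖ + ‖y‖)^q ≤ 2^q (‖x‖^q + ‖y‖^q)`,
so the second term is at least `2^(-q) ‖x − y‖^(q+2)`.
-/

open RCLike Real

theorem Real.add_rpow_le_two_rpow_mul_add_rpow {a b p : ℝ} (ha : 0 ≤ a) (hb : 0 ≤ b)
    (hp : 0 ≤ p) : (a + b) ^ p ≤ 2 ^ p * (a ^ p + b ^ p) := by
  have hmax : max a b ^ p ≤ a ^ p + b ^ p := by
    rcases max_choice a b with h | h <;> rw [h]
    · linarith [rpow_nonneg hb p]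
    · linarith [rpow_nonneg ha p]
  calc (a + b) ^ p ≤ (2 * max a b) ^ p :=
        rpow_le_rpow (by positivity) (by linarith [le_max_left a b, le_max_right a b]) hp
    _ = 2 ^ p * max a b ^ p := mul_rpow zero_le_two (le_max_of_le_left ha)
    _ ≤ 2 ^ p * (a ^ p + b ^ p) := by gcongr

theorem Real.rpow_sub_rpow_mul_sq_sub_sq_nonneg {a b p : ℝ} (ha : 0 ≤ a) (hb : 0 ≤ b)
    (hp : 0 ≤ p) : 0 ≤ (a ^ p - b ^ p) * (a ^ 2 - b ^ 2) :=
  ((monotoneOn_rpow_Ici_of_exponent_nonneg hp).monovaryOn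
    (pow_left_monotoneOn (n := 2))).sub_mul_sub_nonneg (Set.mem_Ici.2 hb) (Set.mem_Ici.2 ha)

theorem two_mul_re_inner_smul_sub_smul_sub {𝕜 E : Type*} [RCLike 𝕜] [NormedAddCommGroup E]
    [InnerProductSpace 𝕜 E] [Module ℝ E] [IsScalarTower ℝ 𝕜 E] (r s : ℝ) (x y : E) :
    2 * re (inner 𝕜 (r • x - s • y) (x - y)) =
      (r - s) * (‖x‖ ^ 2 - ‖y‖ ^ 2) + (r + s) * ‖x - y‖ ^ 2 := by
  simp only [real_smul_eq_coe_smul (K := 𝕜), inner_sub_left, inner_sub_right, inner_smul_left,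
    conj_ofReal, map_sub, re_ofReal_mul, inner_self_eq_norm_sq, inner_re_symm (𝕜 := 𝕜) y x]
  rw [norm_sub_sq (𝕜 := 𝕜)]
  ring

/-- Pointwise strong monotonicity of the Kerr nonlinearity `x ↦ ‖x‖^q • x`:
for every `q > 0` there is `c > 0` (depending only on `q`) such that in every
complex inner product space `E`, for all `x y : E`,
`Re⟪‖x‖^q • x − ‖y‖^q • y, x − y⟫ ≥ c ‖x − y‖^(q+2)`. -/
theorem stmt_0 (q : ℝ) (hq : 0 < q) :
    ∃ c : ℝ, 0 < c ∧
      ∀ (E : Type*) [NormedAddCommGroup E] [InnerProductSpace ℂ E] (x y : E),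
        c * ‖x - y‖ ^ (q + 2) ≤
          (inner ℂ ((‖x‖ ^ q) • x - (‖y‖ ^ q) • y) (x - y) : ℂ).re := by
  refine ⟨(2 ^ (q + 1))⁻¹, by positivity, fun E _ _ x y => ?_⟩
  have hexpand := two_mul_re_inner_smul_sub_smul_sub (𝕜 := ℂ) (‖x‖ ^ q) (‖y‖ ^ q) x y
  have hmono := rpow_sub_rpow_mul_sq_sub_sq_nonneg (norm_nonneg x) (norm_nonneg y) hq.le
  have htri : ‖x - y‖ ^ q ≤ 2 ^ q * (‖x‖ ^ q + ‖y‖ ^ q) :=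
    (rpow_le_rpow (norm_nonneg _) (norm_sub_le x y) hq.le).trans
      (add_rpow_le_two_rpow_mul_add_rpow (norm_nonneg x) (norm_nonneg y) hq.le)
  have h2q : (0 : ℝ) < 2 ^ q := by positivity
  calc (2 ^ (q + 1))⁻¹ * ‖x - y‖ ^ (q + 2)
      = ‖x - y‖ ^ q / 2 ^ q * ‖x - y‖ ^ 2 / 2 := by
        rw [rpow_add_one two_ne_zero, rpow_add' (norm_nonneg _) (by positivity), rpow_two]
        field_simp
    _ ≤ (‖x‖ ^ q + ‖y‖ ^ q) * ‖x - y‖ ^ 2 / 2 := by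
        gcongr
        exact (div_le_iff₀' h2q).2 htri
    _ ≤ (inner ℂ ((‖x‖ ^ q) • x - (‖y‖ ^ q) • y) (x - y) : ℂ).re := by
        rw [← RCLike.re_to_complex]
        linarith
end

section
/- Let q > 0. There exists a constant C > 0, depending only on q, such that for every σ-finite measure space (X, μ) and all measurable u, v : X → ℂ⁶ with finite L^{q+2}-norm, the L^{(q+2)/(q+1)}-norm of x ↦ ‖u(x)‖^q • u(x) − ‖v(x)‖^q • v(x) is at most C · (‖u‖_{L^{q+2}}^q + ‖v‖_{L^{q+2}}^q) · ‖u − v‖_{L^{q+2}}, where ‖w‖_{L^p} := (∫_X ‖w(x)‖^p dμ)^{1/p}. -/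
/-!
Pointwise, if `‖b‖ ≤ ‖a‖` then
`‖a‖^q • a - ‖b‖^q • b = ‖a‖^q • (a - b) + (‖a‖^q - ‖b‖^q) • b`, and Bernoulli's inequality for
the exponent `q + 1` at `t = ‖b‖ / ‖a‖` bounds the second term by `q ‖a‖^q ‖a - b‖`; hence
`‖F a - F b‖ ≤ (q + 1) (‖a‖^q + ‖b‖^q) ‖a - b‖`. With `p = q + 2` and `r = p / (q + 1)`,
Hölder's inequality for `1/r = q/p + 1/p`, Minkowski's inequality in `L^{p/q}` and
`‖ ‖u‖^q ‖_{p/q} = ‖u‖_p^q` then give the estimate with `C = q + 1`.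
-/

open MeasureTheory ENNReal

theorem Real.rpow_sub_rpow_mul_le {q x y : ℝ} (hq : 0 ≤ q) (hy : 0 ≤ y) (hyx : y ≤ x) :
    (x ^ q - y ^ q) * y ≤ q * x ^ q * (x - y) := by
  obtain rfl | hx := (hy.trans hyx).eq_or_lt
  · obtain rfl : y = 0 := le_antisymm hyx hy
    simp
  set t := y / x
  have ht : 0 ≤ t := div_nonneg hy hx.le
  have hy_eq : y = t * x := (div_mul_cancel₀ y hx.ne').symm
  have hyq : y ^ q = t ^ q * x ^ q := by rw [hy_eq, Real.mul_rpow ht hx.le]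
  have bernoulli : (q + 1) * t - q ≤ t ^ q * t := by
    have := one_add_mul_self_le_rpow_one_add (s := t - 1) (p := q + 1) (by linarith) (by linarith)
    rw [add_sub_cancel, Real.rpow_add' ht (by linarith), Real.rpow_one] at this
    linarith
  have hxq : 0 ≤ x ^ q * x := mul_nonneg (Real.rpow_nonneg hx.le q) hx.le
  rw [hyq, hy_eq]
  nlinarith [mul_le_mul_of_nonneg_left bernoulli hxq]

theorem holderTriple_div_ofReal {q : ℝ} (hq : 0 < q) {p : ℝ≥0∞} :
    HolderTriple (p / ENNReal.ofReal q) p (p / ENNReal.ofReal (q + 1)) := by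
  have hq0 : ENNReal.ofReal q ≠ 0 := by simpa using hq
  refine ⟨?_⟩
  rw [ENNReal.inv_div (Or.inl ofReal_ne_top) (Or.inl hq0),
    ENNReal.inv_div (Or.inl ofReal_ne_top) (Or.inl (by simp; linarith)), ← one_div,
    ENNReal.div_add_div_same, ENNReal.ofReal_add hq.le zero_le_one, ENNReal.ofReal_one]

section

variable {X E : Type*} [MeasurableSpace X] {μ : Measure X} [NormedAddCommGroup E]

theorem norm_rpow_smul_sub_rpow_smul_le_of_norm_le [NormedSpace ℝ E] {q : ℝ} (hq : 0 ≤ q)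
    {a b : E} (hba : ‖b‖ ≤ ‖a‖) :
    ‖‖a‖ ^ q • a - ‖b‖ ^ q • b‖ ≤ (q + 1) * ‖a‖ ^ q * ‖a - b‖ := by
  have haq : 0 ≤ ‖a‖ ^ q := Real.rpow_nonneg (norm_nonneg a) q
  have hqab : ‖b‖ ^ q ≤ ‖a‖ ^ q := Real.rpow_le_rpow (norm_nonneg b) hba hq
  calc ‖‖a‖ ^ q • a - ‖b‖ ^ q • b‖
      = ‖‖a‖ ^ q • (a - b) + (‖a‖ ^ q - ‖b‖ ^ q) • b‖ := by
        rw [smul_sub, sub_smul, sub_add_sub_cancel]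
    _ ≤ ‖a‖ ^ q * ‖a - b‖ + (‖a‖ ^ q - ‖b‖ ^ q) * ‖b‖ := by
        refine (norm_add_le _ _).trans_eq ?_
        rw [norm_smul, norm_smul, Real.norm_of_nonneg haq, Real.norm_of_nonneg (sub_nonneg.2 hqab)]
    _ ≤ ‖a‖ ^ q * ‖a - b‖ + q * ‖a‖ ^ q * (‖a‖ - ‖b‖) := by
        linarith [Real.rpow_sub_rpow_mul_le hq (norm_nonneg b) hba]
    _ ≤ (q + 1) * ‖a‖ ^ q * ‖a - b‖ := by
        have := mul_le_mul_of_nonneg_left (norm_sub_norm_le a b) (mul_nonneg hq haq)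
        linarith

theorem norm_rpow_smul_sub_rpow_smul_le [NormedSpace ℝ E] {q : ℝ} (hq : 0 ≤ q) (a b : E) :
    ‖‖a‖ ^ q • a - ‖b‖ ^ q • b‖ ≤ (q + 1) * (‖a‖ ^ q + ‖b‖ ^ q) * ‖a - b‖ := by
  rcases le_total ‖b‖ ‖a‖ with hba | hab
  · refine (norm_rpow_smul_sub_rpow_smul_le_of_norm_le hq hba).trans ?_
    gcongr
    exact le_add_of_nonneg_right (Real.rpow_nonneg (norm_nonneg b) q)
  · rw [← norm_neg, neg_sub, norm_sub_rev a b]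
    refine (norm_rpow_smul_sub_rpow_smul_le_of_norm_le hq hab).trans ?_
    gcongr
    exact le_add_of_nonneg_left (Real.rpow_nonneg (norm_nonneg a) q)

theorem eLpNorm_rpow_add_rpow_le {q : ℝ} (hq : 0 < q) {p : ℝ≥0∞} (hqp : ENNReal.ofReal q ≤ p)
    {u v : X → E} (hu : AEStronglyMeasurable u μ) (hv : AEStronglyMeasurable v μ) :
    eLpNorm (fun x => ‖u x‖ ^ q + ‖v x‖ ^ q) (p / ENNReal.ofReal q) μ ≤
      eLpNorm u p μ ^ q + eLpNorm v p μ ^ q := by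
  have hq0 : ENNReal.ofReal q ≠ 0 := by simpa using hq
  have hs : p / ENNReal.ofReal q * ENNReal.ofReal q = p := ENNReal.div_mul_cancel hq0 ofReal_ne_top
  have hs1 : 1 ≤ p / ENNReal.ofReal q := by
    rwa [ENNReal.le_div_iff_mul_le (Or.inl hq0) (Or.inl ofReal_ne_top), one_mul]
  calc eLpNorm (fun x => ‖u x‖ ^ q + ‖v x‖ ^ q) (p / ENNReal.ofReal q) μ
      ≤ eLpNorm (fun x => ‖u x‖ ^ q) (p / ENNReal.ofReal q) μ
        + eLpNorm (fun x => ‖v x‖ ^ q) (p / ENNReal.ofReal q) μ :=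
        eLpNorm_add_le (by fun_prop (disch := positivity)) (by fun_prop (disch := positivity)) hs1
    _ = eLpNorm u p μ ^ q + eLpNorm v p μ ^ q := by
        rw [eLpNorm_norm_rpow u hq, eLpNorm_norm_rpow v hq, hs]

theorem eLpNorm_rpow_smul_sub_rpow_smul_le [NormedSpace ℝ E] {q : ℝ} (hq : 0 < q) {p : ℝ≥0∞}
    (hqp : ENNReal.ofReal q ≤ p) {u v : X → E} (hu : AEStronglyMeasurable u μ)
    (hv : AEStronglyMeasurable v μ) :
    eLpNorm (fun x => ‖u x‖ ^ q • u x - ‖v x‖ ^ q • v x) (p / ENNReal.ofReal (q + 1)) μ ≤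
      ENNReal.ofReal (q + 1) * (eLpNorm u p μ ^ q + eLpNorm v p μ ^ q) * eLpNorm (u - v) p μ := by
  have := holderTriple_div_ofReal hq (p := p)
  set A : X → ℝ := fun x => ‖u x‖ ^ q + ‖v x‖ ^ q
  have hA : AEStronglyMeasurable A μ := by fun_prop (disch := positivity)
  have hpointwise : ∀ x, ‖‖u x‖ ^ q • u x - ‖v x‖ ^ q • v x‖ ≤ (q + 1) * ‖(A • (u - v)) x‖ :=
    fun x => by
      rw [Pi.smul_apply', Pi.sub_apply, norm_smul, Real.norm_of_nonneg (by positivity), ← mul_assoc]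
      exact norm_rpow_smul_sub_rpow_smul_le hq.le (u x) (v x)
  calc eLpNorm (fun x => ‖u x‖ ^ q • u x - ‖v x‖ ^ q • v x) (p / ENNReal.ofReal (q + 1)) μ
      ≤ ENNReal.ofReal (q + 1) * eLpNorm (A • (u - v)) (p / ENNReal.ofReal (q + 1)) μ :=
        eLpNorm_le_mul_eLpNorm_of_ae_le_mul (ae_of_all _ hpointwise) _
    _ ≤ ENNReal.ofReal (q + 1) * (eLpNorm A (p / ENNReal.ofReal q) μ * eLpNorm (u - v) p μ) := by
        gcongr
        exact eLpNorm_smul_le_mul_eLpNorm (hu.sub hv) hA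
    _ ≤ ENNReal.ofReal (q + 1) * (eLpNorm u p μ ^ q + eLpNorm v p μ ^ q) * eLpNorm (u - v) p μ := by
        rw [← mul_assoc]
        gcongr
        exact eLpNorm_rpow_add_rpow_le hq hqp hu hv

theorem toReal_eLpNorm_ofReal_eq_integral_norm_rpow {f : X → E} (hf : AEStronglyMeasurable f μ)
    {p : ℝ} (hp : 0 < p) :
    (eLpNorm f (ENNReal.ofReal p) μ).toReal = (∫ x, ‖f x‖ ^ p ∂μ) ^ (1 / p) := by
  rw [toReal_eLpNorm hf, lpNorm_eq_integral_norm_rpow_toReal (by simpa using hp) ofReal_ne_top hf,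
    toReal_ofReal hp.le, one_div]

end

/-- Local Lipschitz estimate for the Kerr nonlinearity `F(u)(x) = ‖u(x)‖^q • u(x)`:
for every `q > 0` there is `C > 0` (depending only on `q`) such that for every
σ-finite measure space and all measurable `u, v` with finite `L^{q+2}`-norm,
`‖F(u) − F(v)‖_{L^{(q+2)/(q+1)}} ≤ C (‖u‖_{L^{q+2}}^q + ‖v‖_{L^{q+2}}^q) ‖u − v‖_{L^{q+2}}`. -/
theorem stmt_4 (q : ℝ) (hq : 0 < q) :
    ∃ C : ℝ, 0 < C ∧
      ∀ (X : Type*) [MeasurableSpace X] (μ : Measure X), SigmaFinite μ →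
        ∀ u v : X → EuclideanSpace ℂ (Fin 6), StronglyMeasurable u → StronglyMeasurable v →
          Integrable (fun x => ‖u x‖ ^ (q + 2)) μ →
          Integrable (fun x => ‖v x‖ ^ (q + 2)) μ →
          (∫ x, ‖(‖u x‖ ^ q) • u x - (‖v x‖ ^ q) • v x‖ ^ ((q + 2) / (q + 1)) ∂μ) ^
              ((q + 1) / (q + 2)) ≤
            C * (((∫ x, ‖u x‖ ^ (q + 2) ∂μ) ^ (1 / (q + 2))) ^ q +
                  ((∫ x, ‖v x‖ ^ (q + 2) ∂μ) ^ (1 / (q + 2))) ^ q) *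
              (∫ x, ‖u x - v x‖ ^ (q + 2) ∂μ) ^ (1 / (q + 2)) := by
  refine ⟨q + 1, by linarith, fun X _ μ _ u v hu hv hu_int hv_int => ?_⟩
  have hq2 : 0 < q + 2 := by linarith
  have memLp {w : X → EuclideanSpace ℂ (Fin 6)} (hw : StronglyMeasurable w)
      (hw_int : Integrable (fun x => ‖w x‖ ^ (q + 2)) μ) : MemLp w (ENNReal.ofReal (q + 2)) μ :=
    (integrable_norm_rpow_iff hw.aestronglyMeasurable (by simpa using hq2) ofReal_ne_top).1
      (by rwa [toReal_ofReal hq2.le])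
  have hu_p := memLp hu hu_int
  have hv_p := memLp hv hv_int
  have key := eLpNorm_rpow_smul_sub_rpow_smul_le (μ := μ) hq
    (ofReal_le_ofReal (by linarith : q ≤ q + 2)) hu_p.1 hv_p.1
  rw [← ofReal_div_of_pos (by linarith)] at key
  have hF : AEStronglyMeasurable (fun x => ‖u x‖ ^ q • u x - ‖v x‖ ^ q • v x) μ := by
    fun_prop (disch := positivity)
  calc _ = (eLpNorm _ (ENNReal.ofReal ((q + 2) / (q + 1))) μ).toReal := by
        rw [toReal_eLpNorm_ofReal_eq_integral_norm_rpow hF (by positivity), one_div_div]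
    _ ≤ _ := toReal_mono (by finiteness [hu_p.2, hv_p.2, (hu_p.sub hv_p).2]) key
    _ = _ := by
        rw [toReal_mul, toReal_mul, toReal_ofReal (by linarith),
          toReal_add (by finiteness [hu_p.2]) (by finiteness [hv_p.2]), ← toReal_rpow,
          ← toReal_rpow, toReal_eLpNorm_ofReal_eq_integral_norm_rpow hu_p.1 hq2,
          toReal_eLpNorm_ofReal_eq_integral_norm_rpow hv_p.1 hq2,
          toReal_eLpNorm_ofReal_eq_integral_norm_rpow (hu_p.1.sub hv_p.1) hq2]
        rfl
end

section
/- Let q > 1, let n ≥ 1, and let F : ℂⁿ → ℂⁿ be given by F(x) = ‖x‖^q • x, regarded as a map between ℝ-normed spaces. Then at every x ≠ 0 the map F is twice real Fréchet differentiable with second derivative F''(x)(v, w) = q‖x‖^{q−2} ( (q−2)‖x‖^{−2} Re⟨x, w⟩ Re⟨x, v⟩ • x + Re⟨w, v⟩ • x + Re⟨x, w⟩ • v + Re⟨x, v⟩ • w ), and there is a constant C > 0 depending only on q such that ‖F''(x)(v, v)‖ ≤ C ‖x‖^{q−1} ‖v‖² for all x ≠ 0 and all v ∈ ℂⁿ.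 -/
/-!
Away from `0` the map `z ↦ ‖z‖ ^ p = (‖z‖ ^ 2) ^ (p / 2)` is differentiable for every real `p`,
so `F(z) = ‖z‖ ^ q • z` has `F'(z) = ‖z‖ ^ q • id + q ‖z‖ ^ (q - 2) ⟪z, ·⟫ • z` near `x ≠ 0`, and
one more product rule gives `F''(x)`. In `F''(x)(v, v)` each of the four terms is at most
`‖x‖ ^ (q - 1) ‖v‖ ^ 2` times a constant by Cauchy–Schwarz, whence `C = q (|q - 2| + 3)`.
-/

open Real Topology

theorem EuclideanSpace.real_inner_eq_re_inner {ι : Type*} [Fintype ι] (x y : EuclideanSpace ℂ ι) :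
    inner ℝ x y = (inner ℂ x y).re := by
  simp [PiLp.inner_apply, Complex.re_sum]

section

variable {E : Type*} [NormedAddCommGroup E] [InnerProductSpace ℝ E]

theorem hasFDerivAt_norm_rpow_of_ne_zero (p : ℝ) {x : E} (hx : x ≠ 0) :
    HasFDerivAt (fun y : E ↦ ‖y‖ ^ p) ((p * ‖x‖ ^ (p - 2)) • innerSL ℝ x) x := by
  have h := ((hasStrictFDerivAt_norm_sq x).rpow_const (p := p / 2) (by simp [hx])).hasFDerivAt
  simp only [← Real.rpow_natCast_mul (norm_nonneg _), ← Nat.cast_smul_eq_nsmul ℝ, smul_smul] at h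
  convert h using 2 <;> push_cast <;> ring_nf

theorem hasFDerivAt_norm_rpow_smul_self (q : ℝ) {x : E} (hx : x ≠ 0) :
    HasFDerivAt (fun y : E ↦ ‖y‖ ^ q • y)
      (‖x‖ ^ q • ContinuousLinearMap.id ℝ E +
        ContinuousLinearMap.smulRightL ℝ E E ((q * ‖x‖ ^ (q - 2)) • innerSL ℝ x) x) x :=
  (hasFDerivAt_norm_rpow_of_ne_zero q hx).smul (hasFDerivAt_id x)

noncomputable def kerrSecondDeriv (q : ℝ) (x v w : E) : E :=
  (q * ‖x‖ ^ (q - 2)) •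
    (((q - 2) * ‖x‖ ^ (-2 : ℝ) * inner ℝ x w * inner ℝ x v) • x +
      inner ℝ w v • x + inner ℝ x w • v + inner ℝ x v • w)

theorem hasFDerivAt_fderiv_norm_rpow_smul_self (q : ℝ) {x : E} (hx : x ≠ 0) :
    ∃ f'' : E →L[ℝ] E →L[ℝ] E,
      HasFDerivAt (fderiv ℝ (fun y : E ↦ ‖y‖ ^ q • y)) f'' x ∧
        ∀ v w, f'' v w = kerrSecondDeriv q x v w := by
  have hfderiv : fderiv ℝ (fun y : E ↦ ‖y‖ ^ q • y) =ᶠ[𝓝 x] fun z ↦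
      ‖z‖ ^ q • ContinuousLinearMap.id ℝ E +
        ContinuousLinearMap.smulRightL ℝ E E ((q * ‖z‖ ^ (q - 2)) • innerSL ℝ z) z := by
    filter_upwards [eventually_ne_nhds hx] with z hz
    exact (hasFDerivAt_norm_rpow_smul_self q hz).fderiv
  have hscalar := (hasFDerivAt_norm_rpow_of_ne_zero q hx).smul_const (ContinuousLinearMap.id ℝ E)
  have hcoeff := ((hasFDerivAt_norm_rpow_of_ne_zero (q - 2) hx).const_mul q).smul
    (innerSL ℝ).hasFDerivAt
  have hrankOne := (ContinuousLinearMap.smulRightL ℝ E E).hasFDerivAt_of_bilinear hcoeff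
    (hasFDerivAt_id x)
  refine ⟨_, (hscalar.add hrankOne).congr_of_eventuallyEq hfderiv, fun v w ↦ ?_⟩
  have hpow : ‖x‖ ^ (q - 2 - 2) = ‖x‖ ^ (q - 2) * ‖x‖ ^ (-2 : ℝ) := by
    rw [← rpow_add (norm_pos_iff.mpr hx)]; ring_nf
  -- `(innerSL ℝ).hasFDerivAt` applies `innerSL ℝ` as a linear rather than a semilinear map,
  -- which `innerSL_apply_apply` does not match.
  have hinner (a b : E) : (innerSL ℝ : E →L[ℝ] E →L[ℝ] ℝ) a b = inner ℝ a b := rfl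
  simp only [kerrSecondDeriv, hpow, hinner, real_inner_comm, add_apply,
    smul_apply, ContinuousLinearMap.id_apply, ContinuousLinearMap.comp_id,
    ContinuousLinearMap.precompR_apply, ContinuousLinearMap.precompL_apply,
    ContinuousLinearMap.compL_apply, ContinuousLinearMap.smulRightL_apply_apply,
    ContinuousLinearMap.smulRight_apply, Pi.smul_apply', map_add, map_smul, id_eq, smul_eq_mul]
  module

theorem norm_kerrSecondDeriv_self_le (q : ℝ) {x : E} (hx : x ≠ 0) (v : E) :
    ‖kerrSecondDeriv q x v v‖ ≤ |q| * (|q - 2| + 3) * ‖x‖ ^ (q - 1) * ‖v‖ ^ 2 := by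
  have hx0 : 0 < ‖x‖ := norm_pos_iff.mpr hx
  have hradial : ‖((q - 2) * ‖x‖ ^ (-2 : ℝ) * inner ℝ x v * inner ℝ x v) • x‖ ≤
      |q - 2| * (‖x‖ * ‖v‖ ^ 2) := by
    have hcoeff : (q - 2) * ‖x‖ ^ (-2 : ℝ) * inner ℝ x v * inner ℝ x v =
        (q - 2) * (inner ℝ x v / ‖x‖) ^ 2 := by
      rw [rpow_neg hx0.le, rpow_two]; ring
    have hcos : |inner ℝ x v / ‖x‖| ≤ ‖v‖ := by
      rw [abs_div, abs_norm, div_le_iff₀ hx0, mul_comm]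
      exact abs_real_inner_le_norm x v
    rw [hcoeff, norm_smul, norm_mul, norm_pow, Real.norm_eq_abs, Real.norm_eq_abs]
    calc |q - 2| * |inner ℝ x v / ‖x‖| ^ 2 * ‖x‖ ≤ |q - 2| * ‖v‖ ^ 2 * ‖x‖ := by gcongr
      _ = _ := by ring
  have hbracket : ‖((q - 2) * ‖x‖ ^ (-2 : ℝ) * inner ℝ x v * inner ℝ x v) • x +
      inner ℝ v v • x + inner ℝ x v • v + inner ℝ x v • v‖ ≤ (|q - 2| + 3) * (‖x‖ * ‖v‖ ^ 2) := by
    refine norm_add₄_le.trans ?_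
    have hself : ‖inner ℝ v v • x‖ = ‖x‖ * ‖v‖ ^ 2 := by
      rw [real_inner_self_eq_norm_sq, norm_smul, norm_pow, norm_norm, mul_comm]
    rw [hself, norm_smul (inner ℝ x v) v, Real.norm_eq_abs]
    have hmixed : |inner ℝ x v| * ‖v‖ ≤ ‖x‖ * ‖v‖ ^ 2 := by
      calc |inner ℝ x v| * ‖v‖ ≤ ‖x‖ * ‖v‖ * ‖v‖ := by gcongr; exact abs_real_inner_le_norm x v
        _ = _ := by ring
    linarith
  calc ‖kerrSecondDeriv q x v v‖
      ≤ |q| * ‖x‖ ^ (q - 2) * ((|q - 2| + 3) * (‖x‖ * ‖v‖ ^ 2)) := by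
        rw [kerrSecondDeriv, norm_smul, Real.norm_eq_abs, abs_mul,
          abs_of_pos (rpow_pos_of_pos hx0 _)]
        gcongr
    _ = |q| * (|q - 2| + 3) * (‖x‖ ^ (q - 2) * ‖x‖) * ‖v‖ ^ 2 := by ring
    _ = |q| * (|q - 2| + 3) * ‖x‖ ^ (q - 1) * ‖v‖ ^ 2 := by
        rw [← rpow_add_one hx0.ne']; ring_nf

end

theorem stmt_6_general (q : ℝ) (hq : 1 < q) (n : ℕ) :
    (∀ x : EuclideanSpace ℂ (Fin n), x ≠ 0 →
      ∃ f'' : EuclideanSpace ℂ (Fin n) →L[ℝ]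
          EuclideanSpace ℂ (Fin n) →L[ℝ] EuclideanSpace ℂ (Fin n),
        HasFDerivAt (fderiv ℝ (fun y : EuclideanSpace ℂ (Fin n) => (‖y‖ ^ q) • y)) f'' x ∧
        ∀ v w, f'' v w = (q * ‖x‖ ^ (q - 2)) •
          (((q - 2) * ‖x‖ ^ (-2 : ℝ) * (inner ℂ x w : ℂ).re * (inner ℂ x v : ℂ).re) • x +
            (inner ℂ w v : ℂ).re • x + (inner ℂ x w : ℂ).re • v + (inner ℂ x v : ℂ).re • w)) ∧
    ∃ C : ℝ, 0 < C ∧ ∀ x : EuclideanSpace ℂ (Fin n), x ≠ 0 →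
      ∀ v : EuclideanSpace ℂ (Fin n),
        ‖fderiv ℝ (fderiv ℝ (fun y : EuclideanSpace ℂ (Fin n) => (‖y‖ ^ q) • y)) x v v‖ ≤
          C * ‖x‖ ^ (q - 1) * ‖v‖ ^ 2 := by
  have hq0 : 0 < q := zero_lt_one.trans hq
  refine ⟨fun x hx ↦ ?_, q * (|q - 2| + 3), by positivity, fun x hx v ↦ ?_⟩ <;>
    obtain ⟨f'', hf, hf''⟩ := hasFDerivAt_fderiv_norm_rpow_smul_self q hx
  · refine ⟨f'', hf, fun v w ↦ ?_⟩
    simp only [hf'', kerrSecondDeriv, EuclideanSpace.real_inner_eq_re_inner]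
  · rw [hf.fderiv, hf'']
    simpa only [abs_of_pos hq0] using norm_kerrSecondDeriv_self_le q hx v

/-- Second-order real Fréchet differentiability of the Kerr nonlinearity
`F(x) = ‖x‖^q • x` on ℂⁿ for `q > 1`: at `x ≠ 0`,
`F''(x)(v,w) = q‖x‖^{q−2}((q−2)‖x‖^{−2} Re⟪x,w⟫ Re⟪x,v⟫ • x + Re⟪w,v⟫ • x
  + Re⟪x,w⟫ • v + Re⟪x,v⟫ • w)`,
and `‖F''(x)(v,v)‖ ≤ C ‖x‖^{q−1} ‖v‖²` with `C > 0` depending only on `q`. -/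
theorem stmt_6 (q : ℝ) (hq : 1 < q) (n : ℕ) (hn : 1 ≤ n) :
    (∀ x : EuclideanSpace ℂ (Fin n), x ≠ 0 →
      ∃ f'' : EuclideanSpace ℂ (Fin n) →L[ℝ]
          EuclideanSpace ℂ (Fin n) →L[ℝ] EuclideanSpace ℂ (Fin n),
        HasFDerivAt (fderiv ℝ (fun y : EuclideanSpace ℂ (Fin n) => (‖y‖ ^ q) • y)) f'' x ∧
        ∀ v w, f'' v w = (q * ‖x‖ ^ (q - 2)) •
          (((q - 2) * ‖x‖ ^ (-2 : ℝ) * (inner ℂ x w : ℂ).re * (inner ℂ x v : ℂ).re) • x +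
            (inner ℂ w v : ℂ).re • x + (inner ℂ x w : ℂ).re • v + (inner ℂ x v : ℂ).re • w)) ∧
    ∃ C : ℝ, 0 < C ∧ ∀ x : EuclideanSpace ℂ (Fin n), x ≠ 0 →
      ∀ v : EuclideanSpace ℂ (Fin n),
        ‖fderiv ℝ (fderiv ℝ (fun y : EuclideanSpace ℂ (Fin n) => (‖y‖ ^ q) • y)) x v v‖ ≤
          C * ‖x‖ ^ (q - 1) * ‖v‖ ^ 2 :=
  stmt_6_general q hq n
end
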